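/- Let E₀ ∈ ℝ and c, c', J ∈ ℝ³ be linearly dependent vectors. Set L² = ‖c‖² + ‖c'‖² + ‖J‖² and A⁴ = ‖c × c'‖² + ‖c × J‖² + ‖c' × J‖². Suppose Q is a 4×4 positive semidefinite Hermitian complex matrix whose trace equals 4E₀, whose sum of 2×2 principal minors equals 6E₀² - 2L², whose sum of 3×3 principal minors equals 4E₀(E₀² - L²), and whose determinant equals (E₀² - L²)² - 4A⁴. Then E₀ ≥ √(L² + 2A²), where A² = √(A⁴). -/

import Mathlib

open scoped RealInnerProductSpace ComplexOrder

noncomputable section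

/-- The cross product on Euclidean `ℝ³`. -/
def cross3 (u v : EuclideanSpace ℝ (Fin 3)) : EuclideanSpace ℝ (Fin 3) :=
  (EuclideanSpace.equiv (Fin 3) ℝ).symm
    ![u 1 * v 2 - u 2 * v 1, u 2 * v 0 - u 0 * v 2, u 0 * v 1 - u 1 * v 0]

/-- The sum of the `k × k` principal minors of a `4 × 4` complex matrix. -/
def principalMinorSum (Q : Matrix (Fin 4) (Fin 4) ℂ) (k : ℕ) : ℂ :=
  ∑ s ∈ Finset.univ.powersetCard k,
    Matrix.det (Q.submatrix (fun i : {x : Fin 4 // x ∈ s} => (i : Fin 4))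
      (fun i : {x : Fin 4 // x ∈ s} => (i : Fin 4)))

/-- `L² = ‖c‖² + ‖c'‖² + ‖J‖²`. -/
def Lsq (c c' J : EuclideanSpace ℝ (Fin 3)) : ℝ := ‖c‖ ^ 2 + ‖c'‖ ^ 2 + ‖J‖ ^ 2

/-- `A⁴ = ‖c × c'‖² + ‖c × J‖² + ‖c' × J‖²`. -/
def Afour (c c' J : EuclideanSpace ℝ (Fin 3)) : ℝ :=
  ‖cross3 c c'‖ ^ 2 + ‖cross3 c J‖ ^ 2 + ‖cross3 c' J‖ ^ 2

lemma detsub (Q : Matrix (Fin 4) (Fin 4) ℂ) (s : Finset (Fin 4)) {n : ℕ} (h : s.card = n)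
    (f : Fin n → Fin 4) (hmem : ∀ i, f i ∈ s) (hmono : StrictMono f) :
    Matrix.det (Q.submatrix (fun i : {x : Fin 4 // x ∈ s} => (i : Fin 4))
      (fun i : {x : Fin 4 // x ∈ s} => (i : Fin 4)))
    = Matrix.det (Matrix.of fun i j : Fin n => Q (f i) (f j)) := by
  have hf : ∀ i, f i = s.orderEmbOfFin h i := fun i => by
    rw [Finset.orderEmbOfFin_unique h hmem hmono]
  rw [← Matrix.det_submatrix_equiv_self (s.orderIsoOfFin h).toEquiv]
  congr 1
  ext i j
  simp [Matrix.submatrix_apply, Finset.coe_orderIsoOfFin_apply, hf]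

lemma pm2_eq (Q : Matrix (Fin 4) (Fin 4) ℂ) :
    principalMinorSum Q 2 =
      (Q 0 0 * Q 1 1 - Q 0 1 * Q 1 0) + (Q 0 0 * Q 2 2 - Q 0 2 * Q 2 0)
      + (Q 0 0 * Q 3 3 - Q 0 3 * Q 3 0) + (Q 1 1 * Q 2 2 - Q 1 2 * Q 2 1)
      + (Q 1 1 * Q 3 3 - Q 1 3 * Q 3 1) + (Q 2 2 * Q 3 3 - Q 2 3 * Q 3 2) := by
  have hp : (Finset.univ : Finset (Fin 4)).powersetCard 2
      = {{0,1},{0,2},{0,3},{1,2},{1,3},{2,3}} := by decide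
  have m1 : ({0,1} : Finset (Fin 4)) ∉ ({{0,2},{0,3},{1,2},{1,3},{2,3}} : Finset (Finset (Fin 4))) := by decide
  have m2 : ({0,2} : Finset (Fin 4)) ∉ ({{0,3},{1,2},{1,3},{2,3}} : Finset (Finset (Fin 4))) := by decide
  have m3 : ({0,3} : Finset (Fin 4)) ∉ ({{1,2},{1,3},{2,3}} : Finset (Finset (Fin 4))) := by decide
  have m4 : ({1,2} : Finset (Fin 4)) ∉ ({{1,3},{2,3}} : Finset (Finset (Fin 4))) := by decide
  have m5 : ({1,3} : Finset (Fin 4)) ∉ ({{2,3}} : Finset (Finset (Fin 4))) := by decide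
  rw [principalMinorSum, hp, Finset.sum_insert m1, Finset.sum_insert m2, Finset.sum_insert m3,
    Finset.sum_insert m4, Finset.sum_insert m5, Finset.sum_singleton,
    detsub Q {0,1} (by decide) ![0,1] (by decide) (by decide),
    detsub Q {0,2} (by decide) ![0,2] (by decide) (by decide),
    detsub Q {0,3} (by decide) ![0,3] (by decide) (by decide),
    detsub Q {1,2} (by decide) ![1,2] (by decide) (by decide),
    detsub Q {1,3} (by decide) ![1,3] (by decide) (by decide),
    detsub Q {2,3} (by decide) ![2,3] (by decide) (by decide)]
  simp [Matrix.det_fin_two]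
  ring

lemma pm3_eq (Q : Matrix (Fin 4) (Fin 4) ℂ) :
    principalMinorSum Q 3 =
      (Q 0 0 * Q 1 1 * Q 2 2 - Q 0 0 * Q 1 2 * Q 2 1 - Q 0 1 * Q 1 0 * Q 2 2
        + Q 0 1 * Q 1 2 * Q 2 0 + Q 0 2 * Q 1 0 * Q 2 1 - Q 0 2 * Q 1 1 * Q 2 0)
      + (Q 0 0 * Q 1 1 * Q 3 3 - Q 0 0 * Q 1 3 * Q 3 1 - Q 0 1 * Q 1 0 * Q 3 3
        + Q 0 1 * Q 1 3 * Q 3 0 + Q 0 3 * Q 1 0 * Q 3 1 - Q 0 3 * Q 1 1 * Q 3 0)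
      + (Q 0 0 * Q 2 2 * Q 3 3 - Q 0 0 * Q 2 3 * Q 3 2 - Q 0 2 * Q 2 0 * Q 3 3
        + Q 0 2 * Q 2 3 * Q 3 0 + Q 0 3 * Q 2 0 * Q 3 2 - Q 0 3 * Q 2 2 * Q 3 0)
      + (Q 1 1 * Q 2 2 * Q 3 3 - Q 1 1 * Q 2 3 * Q 3 2 - Q 1 2 * Q 2 1 * Q 3 3
        + Q 1 2 * Q 2 3 * Q 3 1 + Q 1 3 * Q 2 1 * Q 3 2 - Q 1 3 * Q 2 2 * Q 3 1) := by
  have hp : (Finset.univ : Finset (Fin 4)).powersetCard 3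
      = {{0,1,2},{0,1,3},{0,2,3},{1,2,3}} := by decide
  have m1 : ({0,1,2} : Finset (Fin 4)) ∉ ({{0,1,3},{0,2,3},{1,2,3}} : Finset (Finset (Fin 4))) := by decide
  have m2 : ({0,1,3} : Finset (Fin 4)) ∉ ({{0,2,3},{1,2,3}} : Finset (Finset (Fin 4))) := by decide
  have m3 : ({0,2,3} : Finset (Fin 4)) ∉ ({{1,2,3}} : Finset (Finset (Fin 4))) := by decide
  rw [principalMinorSum, hp, Finset.sum_insert m1, Finset.sum_insert m2, Finset.sum_insert m3,
    Finset.sum_singleton,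
    detsub Q {0,1,2} (by decide) ![0,1,2] (by decide) (by decide),
    detsub Q {0,1,3} (by decide) ![0,1,3] (by decide) (by decide),
    detsub Q {0,2,3} (by decide) ![0,2,3] (by decide) (by decide),
    detsub Q {1,2,3} (by decide) ![1,2,3] (by decide) (by decide)]
  simp [Matrix.det_fin_three]
  ring

set_option maxHeartbeats 1000000 in
lemma charEval (Q : Matrix (Fin 4) (Fin 4) ℂ) (t : ℂ) :
    (Q - t • 1).det =
      Q.det - principalMinorSum Q 3 * t + principalMinorSum Q 2 * t ^ 2
        - Q.trace * t ^ 3 + t ^ 4 := by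
  have htr : Q.trace = Q 0 0 + Q 1 1 + Q 2 2 + Q 3 3 := by
    simp [Matrix.trace, Fin.sum_univ_four, Matrix.diag]
  have hdet : Q.det =
      Q 0 0 * (Q 1 1 * (Q 2 2 * Q 3 3 - Q 2 3 * Q 3 2)
        - Q 1 2 * (Q 2 1 * Q 3 3 - Q 2 3 * Q 3 1)
        + Q 1 3 * (Q 2 1 * Q 3 2 - Q 2 2 * Q 3 1))
      - Q 0 1 * (Q 1 0 * (Q 2 2 * Q 3 3 - Q 2 3 * Q 3 2)
        - Q 1 2 * (Q 2 0 * Q 3 3 - Q 2 3 * Q 3 0)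
        + Q 1 3 * (Q 2 0 * Q 3 2 - Q 2 2 * Q 3 0))
      + Q 0 2 * (Q 1 0 * (Q 2 1 * Q 3 3 - Q 2 3 * Q 3 1)
        - Q 1 1 * (Q 2 0 * Q 3 3 - Q 2 3 * Q 3 0)
        + Q 1 3 * (Q 2 0 * Q 3 1 - Q 2 1 * Q 3 0))
      - Q 0 3 * (Q 1 0 * (Q 2 1 * Q 3 2 - Q 2 2 * Q 3 1)
        - Q 1 1 * (Q 2 0 * Q 3 2 - Q 2 2 * Q 3 0)
        + Q 1 2 * (Q 2 0 * Q 3 1 - Q 2 1 * Q 3 0)) := by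
    simp (config := { decide := true }) [Matrix.det_succ_row_zero, Fin.sum_univ_succ,
      Fin.succAbove, Matrix.submatrix_apply, Fin.ext_iff,
      show Fin.succ (2 : Fin 3) = 3 from rfl, show Fin.castSucc (2 : Fin 3) = 2 from rfl]
    ring
  have hlhs : (Q - t • 1).det =
      (Q 0 0 - t) * ((Q 1 1 - t) * ((Q 2 2 - t) * (Q 3 3 - t) - Q 2 3 * Q 3 2)
        - Q 1 2 * (Q 2 1 * (Q 3 3 - t) - Q 2 3 * Q 3 1)
        + Q 1 3 * (Q 2 1 * Q 3 2 - (Q 2 2 - t) * Q 3 1))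
      - Q 0 1 * (Q 1 0 * ((Q 2 2 - t) * (Q 3 3 - t) - Q 2 3 * Q 3 2)
        - Q 1 2 * (Q 2 0 * (Q 3 3 - t) - Q 2 3 * Q 3 0)
        + Q 1 3 * (Q 2 0 * Q 3 2 - (Q 2 2 - t) * Q 3 0))
      + Q 0 2 * (Q 1 0 * (Q 2 1 * (Q 3 3 - t) - Q 2 3 * Q 3 1)
        - (Q 1 1 - t) * (Q 2 0 * (Q 3 3 - t) - Q 2 3 * Q 3 0)
        + Q 1 3 * (Q 2 0 * Q 3 1 - Q 2 1 * Q 3 0))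
      - Q 0 3 * (Q 1 0 * (Q 2 1 * Q 3 2 - (Q 2 2 - t) * Q 3 1)
        - (Q 1 1 - t) * (Q 2 0 * Q 3 2 - (Q 2 2 - t) * Q 3 0)
        + Q 1 2 * (Q 2 0 * Q 3 1 - Q 2 1 * Q 3 0)) := by
    simp (config := { decide := true }) [Matrix.det_succ_row_zero, Fin.sum_univ_succ,
      Matrix.sub_apply, Matrix.smul_apply, Matrix.one_apply, Fin.succAbove,
      Matrix.submatrix_apply,
      show Fin.succ (2 : Fin 3) = 3 from rfl, show Fin.castSucc (2 : Fin 3) = 2 from rfl]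
    ring
  rw [hlhs, hdet, htr, pm2_eq, pm3_eq]
  ring

/-- **Wang–Xie–Zhang energy inequality in the linearly dependent case.** When the
Henneaux–Teitelboim charge vectors `c, c', J` are linearly dependent, positive
semidefiniteness of the Hermitian energy-momentum matrix `Q` with invariants
`tr Q = 4E₀`, `Q⁽²⁾ = 6E₀² - 2L²`, `Q⁽³⁾ = 4E₀(E₀² - L²)`, `det Q = (E₀² - L²)² - 4A⁴`
yields `E₀ ≥ √(L² + 2A²)`. -/
theorem positive_energy_aAdS_linDep
    (E₀ : ℝ) (c c' J : EuclideanSpace ℝ (Fin 3))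
    (hdep : ¬ LinearIndependent ℝ ![c, c', J])
    (Q : Matrix (Fin 4) (Fin 4) ℂ)
    (hHerm : Q.IsHermitian)
    (hPSD : Q.PosSemidef)
    (htr : Q.trace = ((4 * E₀ : ℝ) : ℂ))
    (h2 : principalMinorSum Q 2 = ((6 * E₀ ^ 2 - 2 * Lsq c c' J : ℝ) : ℂ))
    (h3 : principalMinorSum Q 3 = ((4 * E₀ * (E₀ ^ 2 - Lsq c c' J) : ℝ) : ℂ))
    (hdet : Q.det = (((E₀ ^ 2 - Lsq c c' J) ^ 2 - 4 * Afour c c' J : ℝ) : ℂ)) :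
    E₀ ≥ Real.sqrt (Lsq c c' J + 2 * Real.sqrt (Afour c c' J)) := by
  set L2 := Lsq c c' J with hL2def
  set A4 := Afour c c' J with hA4def
  have hA4 : (0:ℝ) ≤ A4 := by rw [hA4def, Afour]; positivity
  have hL2 : (0:ℝ) ≤ L2 := by rw [hL2def, Lsq]; positivity
  set a := Real.sqrt A4 with hadef
  have ha : (0:ℝ) ≤ a := Real.sqrt_nonneg _
  have ha2 : a ^ 2 = A4 := Real.sq_sqrt hA4
  set r := Real.sqrt (L2 + 2 * a) with hrdef
  have hr2 : r ^ 2 = L2 + 2 * a := Real.sq_sqrt (by positivity)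
  -- the real root of the characteristic polynomial
  have key : ((E₀ ^ 2 - L2) ^ 2 - 4 * A4) - (4 * E₀ * (E₀ ^ 2 - L2)) * (E₀ - r)
      + (6 * E₀ ^ 2 - 2 * L2) * (E₀ - r) ^ 2 - (4 * E₀) * (E₀ - r) ^ 3 + (E₀ - r) ^ 4 = 0 := by
    linear_combination (r ^ 2 - L2 + 2 * a) * hr2 + 4 * ha2
  have hdetzero : (Q - ((E₀ - r : ℝ) : ℂ) • 1).det = 0 := by
    rw [charEval, htr, h2, h3, hdet]
    have := congrArg (Complex.ofReal) key
    push_cast at this ⊢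
    linear_combination this
  obtain ⟨v, hv0, hv⟩ := Matrix.exists_mulVec_eq_zero_iff.mpr hdetzero
  have hQv : Q.mulVec v = ((E₀ - r : ℝ) : ℂ) • v := by
    rw [Matrix.sub_mulVec, Matrix.smul_mulVec, Matrix.one_mulVec, sub_eq_zero] at hv
    exact hv
  have hpos := hPSD.dotProduct_mulVec_nonneg v
  rw [hQv, dotProduct_smul] at hpos
  have hd : dotProduct (star v) v = ((∑ i, Complex.normSq (v i) : ℝ) : ℂ) := by
    simp [dotProduct, Pi.star_apply, Complex.normSq_eq_conj_mul_self]
  rw [hd] at hpos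
  have hS : (0:ℝ) < ∑ i, Complex.normSq (v i) := by
    obtain ⟨i, hi⟩ := Function.ne_iff.mp hv0
    exact Finset.sum_pos' (fun j _ => Complex.normSq_nonneg _)
      ⟨i, Finset.mem_univ i, Complex.normSq_pos.mpr hi⟩
  have hprod : (0:ℝ) ≤ (E₀ - r) * ∑ i, Complex.normSq (v i) := by
    have : (0:ℂ) ≤ (((E₀ - r) * ∑ i, Complex.normSq (v i) : ℝ) : ℂ) := by
      push_cast
      simpa [smul_eq_mul] using hpos
    exact Complex.zero_le_real.mp this
  rw [mul_comm] at hprod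
  have hEr : 0 ≤ E₀ - r := nonneg_of_mul_nonneg_right hprod hS
  linarith


end
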